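/- arXiv:2007.07446 — 4 statements merged into one kernel-verified Lean document; each statement's English description precedes it below -/
import Mathlib

section
/- For elements a, b of a ring R and non-negative integers r and s with r ≥ 1, the iterated commutator [a^r, b]_s can be written as an integer linear combination of products [a,b]_{w_1} · [a,b]_{w_2} ⋯ [a,b]_{w_r} over tuples (w_1, ..., w_r) with 0 ≤ w_i ≤ s. -/
/-- Iterated commutator: `itc a b 0 = a`, `itc a b (k+1) = [itc a b k, b]`. -/
def itc {R : Type*} [Ring R] (a b : R) : ℕ → R
  | 0 => a
  | k + 1 => itc a b k * b - b * itc a b k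

/-! Since `x ↦ [x, b]` obeys the Leibniz rule, the `ℤ`-span `W_s` of `[a,b]_0, …, [a,b]_s`
satisfies `[W_s ^ r, b] ⊆ W_{s+1} ^ r`. As `a ^ r ∈ W_0 ^ r`, induction on `s` gives
`[a ^ r, b]_s ∈ W_s ^ r`, and `W_s ^ r` is spanned by the products `[a,b]_{w_1} ⋯ [a,b]_{w_r}`. -/

namespace Submodule

variable {S A : Type*} [CommSemiring S] [Ring A] [Algebra S A]

theorem map_mul_le_of_leibniz {D : A →ₗ[S] A} (hD : ∀ x y, D (x * y) = D x * y + x * D y)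
    (M N : Submodule S A) : (M * N).map D ≤ M.map D * N + M * N.map D := by
  rw [map_le_iff_le_comap, mul_le]
  intro m hm n hn
  rw [mem_comap, hD]
  exact add_mem_sup (mul_mem_mul (mem_map_of_mem hm) hn) (mul_mem_mul hm (mem_map_of_mem hn))

theorem map_pow_le_of_leibniz {D : A →ₗ[S] A} (hD : ∀ x y, D (x * y) = D x * y + x * D y)
    {M N : Submodule S A} (hMN : M ≤ N) (hDM : M.map D ≤ N) (n : ℕ) :
    (M ^ n).map D ≤ N ^ n := by
  induction n with
  | zero =>
    have hD1 : D 1 = 0 := by simpa using hD 1 1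
    simp [one_eq_span, map_span, hD1]
  | succ n ih =>
    calc (M ^ n * M).map D ≤ (M ^ n).map D * M + M ^ n * M.map D :=
          map_mul_le_of_leibniz hD _ _
      _ ≤ N ^ n * N + N ^ n * N := by gcongr
      _ = N ^ (n + 1) := by rw [add_idem, pow_succ]

end Submodule

open scoped Pointwise in
theorem Set.range_pow {α ι : Type*} [Monoid α] (g : ι → α) (n : ℕ) :
    Set.range g ^ n = Set.range fun w : Fin n → ι => (List.ofFn fun i => g (w i)).prod := by
  ext x
  simp only [Set.mem_pow, Set.mem_range]
  constructor
  · rintro ⟨f, rfl⟩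
    choose w hw using fun i => (f i).2
    exact ⟨w, by simp only [hw]⟩
  · rintro ⟨w, rfl⟩
    exact ⟨fun i => ⟨g (w i), w i, rfl⟩, rfl⟩

section

variable {R : Type*} [Ring R]

def commutatorRight (b : R) : R →ₗ[ℤ] R := LinearMap.mulRight ℤ b - LinearMap.mulLeft ℤ b

theorem commutatorRight_apply (b x : R) : commutatorRight b x = x * b - b * x := rfl

theorem commutatorRight_mul (b x y : R) :
    commutatorRight b (x * y) = commutatorRight b x * y + x * commutatorRight b y := by
  simp only [commutatorRight_apply]
  noncomm_ring

def itcSpan (a b : R) (s : ℕ) : Submodule ℤ R :=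
  Submodule.span ℤ (Set.range fun k : Fin (s + 1) => itc a b k)

theorem itcSpan_mono (a b : R) (s : ℕ) : itcSpan a b s ≤ itcSpan a b (s + 1) :=
  Submodule.span_mono <| Set.range_subset_iff.2 fun k => ⟨k.castSucc, rfl⟩

theorem map_commutatorRight_itcSpan_le (a b : R) (s : ℕ) :
    (itcSpan a b s).map (commutatorRight b) ≤ itcSpan a b (s + 1) := by
  rw [itcSpan, Submodule.map_span, ← Set.range_comp]
  exact Submodule.span_mono <| Set.range_subset_iff.2 fun k => ⟨k.succ, rfl⟩

theorem itc_pow_mem_itcSpan_pow (a b : R) (r s : ℕ) : itc (a ^ r) b s ∈ itcSpan a b s ^ r := by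
  induction s with
  | zero => exact Submodule.pow_mem_pow _ (Submodule.subset_span ⟨0, rfl⟩ : a ∈ itcSpan a b 0) r
  | succ s ih =>
    exact Submodule.map_pow_le_of_leibniz (commutatorRight_mul b) (itcSpan_mono a b s)
      (map_commutatorRight_itcSpan_le a b s) r (Submodule.mem_map_of_mem ih)

end

theorem stmt_1_general {R : Type*} [Ring R] (a b : R) (r s : ℕ) :
    ∃ E : (Fin r → Fin (s + 1)) → ℤ, itc (a ^ r) b s =
      ∑ w : Fin r → Fin (s + 1),
        E w • (List.ofFn fun i => itc a b (w i)).prod := by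
  have h := itc_pow_mem_itcSpan_pow a b r s
  rw [itcSpan, Submodule.span_pow, Set.range_pow, Submodule.mem_span_range_iff_exists_fun] at h
  obtain ⟨E, hE⟩ := h
  exact ⟨E, hE.symm⟩

/-- `[a^r, b]_s` is an integer linear combination of ordered products
`[a,b]_{w_1} ⋯ [a,b]_{w_r}` over tuples `w` with `0 ≤ w_i ≤ s`. -/
theorem stmt_1 {R : Type*} [Ring R] (a b : R) (r s : ℕ) (hr : 1 ≤ r) :
    ∃ E : (Fin r → Fin (s + 1)) → ℤ, itc (a ^ r) b s =
      ∑ w : Fin r → Fin (s + 1),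
        E w • (List.ofFn fun i => itc a b (w i)).prod :=
  stmt_1_general a b r s
end

section
/- For elements a_1, ..., a_n and b in a ring R, non-negative integers i_1, ..., i_n (each i_j ≥ 1) and s, the iterated commutator [a_1^{i_1} a_2^{i_2} ⋯ a_n^{i_n}, b]_s can be written as an integer linear combination of products of the form [a_1,b]_{w_1^{(1)}} ⋯ [a_1,b]_{w_{i_1}^{(1)}} ⋯ [a_n,b]_{w_1^{(n)}} ⋯ [a_n,b]_{w_{i_n}^{(n)}}, where all indices w_s^{(t)} range over 0, ..., s. -/
/-!
`d x = [x, b]` is a derivation of `R`, so by the Leibniz rule `d^k` of a product `c₁ ⋯ cₘ`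
is a sum of products `d^{w₁} c₁ ⋯ d^{wₘ} cₘ` with all `wₜ ≤ k`. Applying this to the
product of the blocks `a_j^{i_j}` and then to each block gives the theorem.
-/

open Submodule Function

section ProductsOfSpans

variable {R : Type*} [Ring R]

theorem ofFn_prod_mem_span_range_ofFn_prod {m : ℕ} {κ : Fin m → Type*}
    (g : (j : Fin m) → κ j → R) {x : Fin m → R} (hx : ∀ j, x j ∈ span ℤ (Set.range (g j))) :
    (List.ofFn x).prod ∈
      span ℤ (Set.range fun k : (j : Fin m) → κ j => (List.ofFn fun j => g j (k j)).prod) := by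
  induction m with
  | zero => exact subset_span ⟨isEmptyElim, by simp⟩
  | succ m ih =>
    have hmul := mul_mem_mul (hx 0) (ih (fun j => g j.succ) fun j => hx j.succ)
    rw [span_mul_span] at hmul
    rw [List.ofFn_succ, List.prod_cons]
    refine span_mono ?_ hmul
    rintro _ ⟨_, ⟨k₀, rfl⟩, _, ⟨k, rfl⟩, rfl⟩
    exact ⟨Fin.cons k₀ k, by simp [List.ofFn_succ]⟩

end ProductsOfSpans

section Leibniz

variable {R : Type*} [Ring R] (d : R →+ R)

theorem map_ofFn_prod_of_leibniz (hd : ∀ x y, d (x * y) = d x * y + x * d y) {m : ℕ}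
    (g : Fin m → R) :
    d (List.ofFn g).prod = ∑ t, (List.ofFn (update g t (d (g t)))).prod := by
  induction m with
  | zero =>
    have h1 : d 1 = 0 := by simpa using hd 1 1
    simp [h1]
  | succ m ih =>
    rw [List.ofFn_succ, List.prod_cons, hd, ih, Fin.sum_univ_succ, Finset.mul_sum]
    simp only [List.ofFn_succ, List.prod_cons, update_self,
      update_comp_eq_of_forall_ne' g _ (Fin.succ_ne_zero), update_of_ne (Fin.succ_ne_zero _).symm,
      update_comp_eq_of_injective' g (Fin.succ_injective m)]

theorem iterate_ofFn_prod_mem_span (hd : ∀ x y, d (x * y) = d x * y + x * d y) {m : ℕ}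
    (c : Fin m → R) (k : ℕ) :
    d^[k] (List.ofFn c).prod ∈
      span ℤ (Set.range fun w : Fin m → Fin (k + 1) =>
        (List.ofFn fun t => d^[w t] (c t)).prod) := by
  induction k with
  | zero => exact subset_span ⟨0, by simp⟩
  | succ k ih =>
    rw [iterate_succ_apply']
    refine (map_span_le d.toIntLinearMap _ _).2 ?_ (mem_map_of_mem ih)
    rintro _ ⟨w, rfl⟩
    rw [AddMonoidHom.coe_toIntLinearMap, map_ofFn_prod_of_leibniz d hd]
    refine sum_mem fun t _ => subset_span ⟨update (Fin.castSucc ∘ w) t (w t).succ, ?_⟩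
    dsimp only
    congr 2
    funext t'
    rw [apply_update (fun t' (j : Fin (k + 2)) => d^[j] (c t'))]
    simp [iterate_succ_apply']

theorem iterate_ofFn_prod_mem_span_of_le (hd : ∀ x y, d (x * y) = d x * y + x * d y) {m : ℕ}
    (c : Fin m → R) {k s : ℕ} (hks : k ≤ s) :
    d^[k] (List.ofFn c).prod ∈
      span ℤ (Set.range fun w : Fin m → Fin (s + 1) =>
        (List.ofFn fun t => d^[w t] (c t)).prod) := by
  refine span_mono ?_ (iterate_ofFn_prod_mem_span d hd c k)
  rintro _ ⟨w, rfl⟩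
  exact ⟨fun t => Fin.castLE (by omega) (w t), by simp⟩

theorem iterate_ofFn_prod_ofFn_prod_mem_span (hd : ∀ x y, d (x * y) = d x * y + x * d y) {n : ℕ}
    {i : Fin n → ℕ} (c : (j : Fin n) → Fin (i j) → R) (s : ℕ) :
    d^[s] (List.ofFn fun j => (List.ofFn (c j)).prod).prod ∈
      span ℤ (Set.range fun w : (j : Fin n) → Fin (i j) → Fin (s + 1) =>
        (List.ofFn fun j => (List.ofFn fun t => d^[w j t] (c j t)).prod).prod) := by
  refine span_le.2 ?_ (iterate_ofFn_prod_mem_span d hd _ s)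
  rintro _ ⟨w, rfl⟩
  exact ofFn_prod_mem_span_range_ofFn_prod
    (fun j (v : Fin (i j) → Fin (s + 1)) => (List.ofFn fun t => d^[v t] (c j t)).prod)
    fun j => iterate_ofFn_prod_mem_span_of_le d hd (c j) (Nat.lt_succ_iff.1 (w j).isLt)

end Leibniz

section Commutator

variable {R : Type*} [Ring R]

def rightCommutator (b : R) : R →+ R :=
  AddMonoidHom.mulRight b - AddMonoidHom.mulLeft b

theorem rightCommutator_apply (b x : R) : rightCommutator b x = x * b - b * x := rfl

theorem rightCommutator_mul (b x y : R) :
    rightCommutator b (x * y) = rightCommutator b x * y + x * rightCommutator b y := by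
  simp only [rightCommutator_apply]
  noncomm_ring

theorem itc_eq_iterate (a b : R) (k : ℕ) : itc a b k = (rightCommutator b)^[k] a := by
  induction k with
  | zero => rfl
  | succ k ih => rw [iterate_succ_apply', ← ih, rightCommutator_apply, itc]

end Commutator

theorem stmt_2_general {R : Type*} [Ring R] (n : ℕ) (a : Fin n → R) (b : R)
    (i : Fin n → ℕ) (s : ℕ) :
    ∃ E : ((j : Fin n) → Fin (i j) → Fin (s + 1)) → ℤ,
      itc ((List.ofFn fun j => a j ^ i j).prod) b s =
        ∑ w : (j : Fin n) → Fin (i j) → Fin (s + 1),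
          E w • (List.ofFn fun j =>
            (List.ofFn fun t => itc (a j) b (w j t)).prod).prod := by
  have hblocks : (List.ofFn fun j => a j ^ i j) =
      List.ofFn fun j => (List.ofFn fun _ : Fin (i j) => a j).prod := by
    simp [List.prod_replicate]
  have hmem := iterate_ofFn_prod_ofFn_prod_mem_span (rightCommutator b) (rightCommutator_mul b)
    (fun j (_ : Fin (i j)) => a j) s
  simp only [← hblocks, ← itc_eq_iterate] at hmem
  obtain ⟨E, hE⟩ := (mem_span_range_iff_exists_fun ℤ).1 hmem
  exact ⟨E, hE.symm⟩

/-- `[a_1^{i_1} ⋯ a_n^{i_n}, b]_s` is an integer linear combination of ordered products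
`[a_1,b]_{w_1^{(1)}} ⋯ [a_1,b]_{w_{i_1}^{(1)}} ⋯ [a_n,b]_{w_1^{(n)}} ⋯ [a_n,b]_{w_{i_n}^{(n)}}`
where all indices range over `0, …, s`. -/
theorem stmt_2 {R : Type*} [Ring R] (n : ℕ) (a : Fin n → R) (b : R)
    (i : Fin n → ℕ) (hi : ∀ j, 1 ≤ i j) (s : ℕ) :
    ∃ E : ((j : Fin n) → Fin (i j) → Fin (s + 1)) → ℤ,
      itc ((List.ofFn fun j => a j ^ i j).prod) b s =
        ∑ w : (j : Fin n) → Fin (i j) → Fin (s + 1),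
          E w • (List.ofFn fun j =>
            (List.ofFn fun t => itc (a j) b (w j t)).prod).prod :=
  stmt_2_general n a b i s
end

section
/- Let e, x_1, ..., x_p be elements of a ring R and n_1, ..., n_p be non-negative integers. Then e · x_1^{n_1} ⋯ x_p^{n_p} = ∑_{i_1=0}^{n_1} ⋯ ∑_{i_p=0}^{n_p} binomial(n_1, i_1) ⋯ binomial(n_p, i_p) · x_1^{i_1} ⋯ x_p^{i_p} · [e, x̄]_{n_1 - i_1, ..., n_p - i_p}. -/
/-- Multi-iterated commutator `[a, b̄]_{k_1,…,k_p}` along a list of pairs `(b, k)`. -/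
def mitc {R : Type*} [Ring R] (a : R) : List (R × ℕ) → R
  | [] => a
  | (b, k) :: t => mitc (itc a b k) t

/-!
Right multiplication by `b` splits as `L + D`, where `L` is left multiplication by `b` and
`D = [·, b]`; since `L` and `D` commute, `e b^n = (L + D)^n e` expands by the binomial theorem
into `∑ C(n,i) b^i [e,b]_{n-i}`. The case of several factors follows by induction on their
number, expanding the first factor and applying the induction hypothesis to each
`[e, x_1]_{n_1 - i_1}`.
-/

open LinearMap

section Ring

variable {R : Type*} [Ring R]

theorem itc_eq_pow_apply (a b : R) (k : ℕ) :
    itc a b k = ((mulRight ℤ b - mulLeft ℤ b) ^ k) a := by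
  induction k with
  | zero => rfl
  | succ k ih => rw [pow_succ', Module.End.mul_apply, ← ih]; rfl

theorem mul_pow_eq_sum_choose_smul_pow_mul_itc (e b : R) (n : ℕ) :
    e * b ^ n = ∑ i ∈ Finset.range (n + 1), n.choose i • (b ^ i * itc e b (n - i)) := by
  have hcomm : Commute (mulLeft ℤ b) (mulRight ℤ b - mulLeft ℤ b) :=
    (commute_mulLeft_right b b).sub_right (Commute.refl _)
  calc e * b ^ n = ((mulLeft ℤ b + (mulRight ℤ b - mulLeft ℤ b)) ^ n) e := by
        rw [add_sub_cancel, pow_mulRight, mulRight_apply]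
    _ = _ := by
        rw [hcomm.add_pow, LinearMap.sum_apply]
        refine Finset.sum_congr rfl fun i _ => ?_
        rw [Module.End.mul_apply, Module.End.mul_apply, Module.End.natCast_apply, map_nsmul,
          map_nsmul, ← itc_eq_pow_apply, pow_mulLeft, mulLeft_apply]

end Ring

/-- `e·x_1^{n_1}⋯x_p^{n_p} = ∑_{i_1,…,i_p} C(n_1,i_1)⋯C(n_p,i_p) ·
x_1^{i_1}⋯x_p^{i_p} · [e,x̄]_{n_1-i_1,…,n_p-i_p}`. -/
theorem stmt_4 {R : Type*} [Ring R] (p : ℕ) (e : R) (x : Fin p → R) (n : Fin p → ℕ) :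
    e * (List.ofFn fun j => x j ^ n j).prod =
      ∑ i : (j : Fin p) → Fin (n j + 1),
        (∏ j, (n j).choose (i j)) •
          ((List.ofFn fun j => x j ^ (i j : ℕ)).prod *
            mitc e (List.ofFn fun j => (x j, n j - (i j : ℕ)))) := by
  induction p generalizing e with
  | zero => simp [mitc]
  | succ p ih =>
    rw [← Equiv.sum_comp (Fin.consEquiv fun j => Fin (n j + 1)), Fintype.sum_prod_type,
      List.ofFn_succ, List.prod_cons, ← mul_assoc, mul_pow_eq_sum_choose_smul_pow_mul_itc,
      ← Fin.sum_univ_eq_sum_range, Finset.sum_mul]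
    refine Finset.sum_congr rfl fun i₀ _ => ?_
    rw [smul_mul_assoc, mul_assoc, ih, Finset.mul_sum, Finset.smul_sum]
    refine Finset.sum_congr rfl fun i _ => ?_
    simp only [Fin.consEquiv_apply, Fin.prod_univ_succ, Fin.cons_zero, Fin.cons_succ,
      List.ofFn_succ, List.prod_cons, mitc, mul_smul_comm, mul_smul, mul_assoc]
end

section
/- Let e, x_1, ..., x_n be elements of a ring R with e^2 = e, and let i_1, ..., i_n be non-negative integers. Then e · x_1^{i_1} ⋯ x_n^{i_n} lies in the additive subgroup generated by elements of the form r · e · [e, x̄]_{k_1,...,k_n} with 0 ≤ k_j ≤ i_j for each j, where r ranges over R with an adjoined identity (i.e., e · x_1^{i_1} ⋯ x_n^{i_n} can be written as a sum of terms each ending in e·[e,x̄]_{k_1,...,k_n}). -/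
/-!
From `[a, b]_{k+1} - a b^{k+1} = ([a, b]_k - a b^k) b - b ([a, b]_k - a b^k) - b a b^k` one gets
`[a, b]_k ≡ a b^k` modulo the left ideal generated by the `a b^l` with `l < k`, and, one variable
at a time, `[a, x̄]_k ≡ a x^k` modulo the left ideal generated by the `a x^l` with `l < k`
componentwise. For `a = e`, multiplying on the left by `e = e²` gives `e x^i ≡ e [e, x̄]_i`
modulo the left ideal generated by the `e x^l`, `l < i`, so well-founded induction on `i` puts
`e x^i` in the left ideal generated by the `e [e, x̄]_k`, `k ≤ i`: the additive subgroup
generated by their left multiples.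
-/

open Submodule

theorem Fin.cons_lt_cons_of_le_of_lt {α : Type*} [Preorder α] {n : ℕ} {m₀ k₀ : α}
    {m k : Fin n → α} (h₀ : m₀ ≤ k₀) (h : m < k) :
    (Fin.cons m₀ m : Fin (n + 1) → α) < Fin.cons k₀ k := by
  obtain ⟨hle, j, hj⟩ := Pi.lt_def.1 h
  exact Pi.lt_def.2 ⟨Fin.cons_le_cons.2 ⟨h₀, hle⟩, j.succ, by simpa using hj⟩

theorem Fin.cons_lt_cons_of_lt_of_le {α : Type*} [Preorder α] {n : ℕ} {m₀ k₀ : α}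
    {m k : Fin n → α} (h₀ : m₀ < k₀) (h : m ≤ k) :
    (Fin.cons m₀ m : Fin (n + 1) → α) < Fin.cons k₀ k :=
  Pi.lt_def.2 ⟨Fin.cons_le_cons.2 ⟨h₀.le, h⟩, 0, by simpa using h₀⟩

section

variable {R : Type*} [Ring R]

theorem Submodule.mul_right_mem_span {s t : Set R} {x : R} (hx : x ∈ span R s) (b : R)
    (h : ∀ y ∈ s, y * b ∈ span R t) : x * b ∈ span R t := by
  have hmap := mem_map_of_mem (f := LinearMap.toSpanSingleton R R b) hx
  rw [map_span] at hmap
  exact span_le.2 (by rintro _ ⟨y, hy, rfl⟩; exact h y hy) hmap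

theorem Submodule.mem_addSubgroupClosure_of_mem_span {s : Set R} {z : R} (hz : z ∈ span R s) :
    z ∈ AddSubgroup.closure {y | ∃ r, ∃ x ∈ s, y = r * x} := by
  have hz' : z ∈ (span R s).toAddSubmonoid := hz
  rw [span_eq_closure] at hz'
  clear hz
  induction hz' using AddSubmonoid.closure_induction with
  | mem y hy =>
    obtain ⟨r, -, x, hx, rfl⟩ := Set.mem_smul.1 hy
    exact AddSubgroup.subset_closure ⟨r, x, hx, rfl⟩
  | zero => exact zero_mem _
  | add _ _ _ _ h₁ h₂ => exact add_mem h₁ h₂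

theorem itc_sub_mul_pow_mem_span (a b : R) (k : ℕ) :
    itc a b k - a * b ^ k ∈ span R {y | ∃ l < k, y = a * b ^ l} := by
  induction k with
  | zero => simp [itc]
  | succ k ih =>
    have hmono : span R {y | ∃ l < k, y = a * b ^ l} ≤
        span R {y | ∃ l < k + 1, y = a * b ^ l} :=
      span_mono fun _ ⟨l, hl, hy⟩ => ⟨l, by omega, hy⟩
    have hsplit : itc a b (k + 1) - a * b ^ (k + 1) =
        (itc a b k - a * b ^ k) * b - b • (itc a b k - a * b ^ k) - b • (a * b ^ k) := by
      simp only [itc, smul_eq_mul, pow_succ]; noncomm_ring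
    rw [hsplit]
    refine sub_mem (sub_mem ?_ (smul_mem _ _ (hmono ih)))
      (smul_mem _ _ (subset_span ⟨k, by omega, rfl⟩))
    refine mul_right_mem_span ih b ?_
    rintro _ ⟨l, hl, rfl⟩
    exact subset_span ⟨l + 1, by omega, by rw [pow_succ, mul_assoc]⟩

def powProd {n : ℕ} (x : Fin n → R) (k : Fin n → ℕ) : R :=
  (List.ofFn fun j => x j ^ k j).prod

theorem powProd_cons {n : ℕ} (b : R) (x : Fin n → R) (m : ℕ) (k : Fin n → ℕ) :
    powProd (Fin.cons b x : Fin (n + 1) → R) (Fin.cons m k) = b ^ m * powProd x k := by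
  simp [powProd, List.ofFn_succ]

theorem mitc_ofFn_cons {n : ℕ} (a b : R) (x : Fin n → R) (m : ℕ) (k : Fin n → ℕ) :
    mitc a (List.ofFn fun j =>
        ((Fin.cons b x : Fin (n + 1) → R) j, (Fin.cons m k : Fin (n + 1) → ℕ) j)) =
      mitc (itc a b m) (List.ofFn fun j => (x j, k j)) := by
  simp [List.ofFn_succ, mitc]

theorem mitc_sub_mul_powProd_mem_span {n : ℕ} (x : Fin n → R) (k : Fin n → ℕ) (a : R) :
    mitc a (List.ofFn fun j => (x j, k j)) - a * powProd x k ∈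
      span R {y | ∃ l < k, y = a * powProd x l} := by
  induction n generalizing a with
  | zero => simp [powProd, mitc]
  | succ n ih =>
    induction x using Fin.consCases with | cons b x => ?_
    induction k using Fin.consCases with | cons m k => ?_
    rw [mitc_ofFn_cons, powProd_cons]
    set c := itc a b m
    have hhead : ∀ l ≤ k, (c - a * b ^ m) * powProd x l ∈
        span R {y | ∃ l < (Fin.cons m k : Fin (n + 1) → ℕ),
          y = a * powProd (Fin.cons b x) l} := by
      intro l hl
      refine mul_right_mem_span (itc_sub_mul_pow_mem_span a b m) _ ?_
      rintro _ ⟨m', hm', rfl⟩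
      exact subset_span ⟨Fin.cons m' l, Fin.cons_lt_cons_of_lt_of_le hm' hl, by
        rw [powProd_cons, mul_assoc]⟩
    have hsplit : mitc c (List.ofFn fun j => (x j, k j)) - a * (b ^ m * powProd x k) =
        (mitc c (List.ofFn fun j => (x j, k j)) - c * powProd x k) +
          (c - a * b ^ m) * powProd x k := by noncomm_ring
    rw [hsplit]
    refine add_mem (span_le.2 ?_ (ih x k c)) (hhead k le_rfl)
    rintro _ ⟨l, hl, rfl⟩
    have hc : c * powProd x l =
        (c - a * b ^ m) * powProd x l + a * powProd (Fin.cons b x) (Fin.cons m l) := by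
      rw [powProd_cons]; noncomm_ring
    rw [hc]
    exact add_mem (hhead l hl.le)
      (subset_span ⟨Fin.cons m l, Fin.cons_lt_cons_of_le_of_lt le_rfl hl, rfl⟩)

theorem mul_powProd_mem_span_mul_mitc {n : ℕ} {e : R} (he : e * e = e) (x : Fin n → R)
    (i : Fin n → ℕ) :
    e * powProd x i ∈
      span R {y | ∃ k ≤ i, y = e * mitc e (List.ofFn fun j => (x j, k j))} := by
  induction i using WellFoundedLT.induction with | _ i ih
  set L := List.ofFn fun j => (x j, i j)
  have hlower : span R {y | ∃ l < i, y = e * powProd x l} ≤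
      span R {y | ∃ k ≤ i, y = e * mitc e (List.ofFn fun j => (x j, k j))} := by
    refine span_le.2 ?_
    rintro _ ⟨l, hl, rfl⟩
    refine span_mono ?_ (ih l hl)
    rintro _ ⟨k, hk, rfl⟩
    exact ⟨k, hk.trans hl.le, rfl⟩
  have hsplit : e * powProd x i = e * mitc e L - e • (mitc e L - e * powProd x i) := by
    rw [smul_eq_mul, mul_sub, ← mul_assoc, he, sub_sub_cancel]
  rw [hsplit]
  exact sub_mem (subset_span ⟨i, le_rfl, rfl⟩)
    (smul_mem _ _ (hlower (mitc_sub_mul_powProd_mem_span x i e)))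

end

/-- For idempotent `e`, `e·x_1^{i_1}⋯x_n^{i_n}` lies in the additive subgroup generated
by elements `r · e · [e,x̄]_{k_1,…,k_n}` with `k_j ≤ i_j`, where `r` ranges over `R`
with an adjoined identity. -/
theorem stmt_7 {R : Type*} [Ring R] (n : ℕ) (e : R) (x : Fin n → R)
    (he : e * e = e) (i : Fin n → ℕ) :
    e * (List.ofFn fun j => x j ^ i j).prod ∈
      AddSubgroup.closure {y : R | ∃ k : Fin n → ℕ, (∀ j, k j ≤ i j) ∧
        ((∃ r : R, y = r * (e * mitc e (List.ofFn fun j => (x j, k j)))) ∨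
          y = e * mitc e (List.ofFn fun j => (x j, k j)))} := by
  have hspan := mem_addSubgroupClosure_of_mem_span (mul_powProd_mem_span_mul_mitc he x i)
  refine AddSubgroup.closure_mono ?_ hspan
  rintro _ ⟨r, _, ⟨k, hk, rfl⟩, rfl⟩
  exact ⟨k, hk, Or.inl ⟨r, rfl⟩⟩
end
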